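/- arXiv:2510.17060 — 2 statements merged into one kernel-verified Lean document; each statement's English description precedes it below -/
import Mathlib

section
/- Let (Z,d) be a metric space, let 0 < τ ≤ 10^{−10}, r > 0, and let C ⊆ Z be a set of diameter at most 4r. Suppose there is a map π : C → ℝ satisfying (1 − 2τ) d(X,Y) ≤ |π(X) − π(Y)| ≤ d(X,Y) for all X, Y ∈ C. Let r_• : C → [0, ∞) be a function with r_X ≤ 2r for all X ∈ C, such that the open balls B(X, τ² r_X), for those X ∈ C with r_X > 0, are pairwise disjoint. Then the set C₊ = {X ∈ C : r_X > 0} is countable, and ∑_{X ∈ C₊} r_X + H¹({X ∈ C : r_X = 0}) ≤ 50 τ^{−2} r, where H¹ denotes the 1-dimensional Hausdorff measure on (Z,d). -/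
open MeasureTheory Metric Set Function
open scoped ENNReal NNReal

/-! Since `1 - 2τ ≥ 1/2`, distances in `C` are at most twice the distances of their images
under `π`. Hence the disjoint balls `B(X, τ² r_X)` project to disjoint intervals
`B(π X, τ² r_X / 4)`, all inside the `τ² r / 2`-neighbourhood of `π(C)`, a set of diameter at
most `4r`; comparing Lebesgue measures bounds `∑ r_X` by `(8τ⁻² + 2) r`. On the zero-radius
centres `π` has a `2`-Lipschitz inverse, so their `H¹`-measure is at most
`2 diam π(C) ≤ 8r`. -/

theorem le_dist_of_disjoint_ball {Z : Type*} [PseudoMetricSpace Z] {x y : Z} {a b : ℝ}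
    (hb : 0 < b) (h : Disjoint (ball x a) (ball y b)) : a ≤ dist x y :=
  not_lt.1 fun hlt => disjoint_right.1 h (mem_ball_self hb) (mem_ball'.2 hlt)

theorem disjoint_ball_of_le_mul_dist {Z W : Type*} [PseudoMetricSpace Z] [PseudoMetricSpace W]
    {f : Z → W} {x y : Z} {a b K : ℝ} (ha : 0 < a) (hb : 0 < b) (hK : 0 < K)
    (hxy : dist x y ≤ K * dist (f x) (f y)) (h : Disjoint (ball x a) (ball y b)) :
    Disjoint (ball (f x) (a / (2 * K))) (ball (f y) (b / (2 * K))) := by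
  have hax : a ≤ dist x y := le_dist_of_disjoint_ball hb h
  have hbx : b ≤ dist x y := dist_comm x y ▸ le_dist_of_disjoint_ball ha h.symm
  refine ball_disjoint_ball ?_
  rw [← add_div, div_le_iff₀ (by positivity)]
  linarith

theorem ediam_image_le_of_dist_le {Z W : Type*} [PseudoMetricSpace Z] [PseudoMetricSpace W]
    {s : Set Z} {f : Z → W} (hf : ∀ x ∈ s, ∀ y ∈ s, dist (f x) (f y) ≤ dist x y) :
    ediam (f '' s) ≤ ediam s :=
  ediam_image_le_iff.2 fun x hx y hy => (edist_le_ediam_of_mem hx hy).trans' <| by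
    simpa only [edist_dist] using ENNReal.ofReal_le_ofReal (hf x hx y hy)

theorem tsum_ofReal_two_mul_le_of_pairwise_disjoint_ball {ι : Type*} {c ρ : ι → ℝ} {R : ℝ}
    (hρ : ∀ i, ρ i ≤ R) (hdisj : Pairwise (Disjoint on fun i => ball (c i) (ρ i))) :
    ∑' i, ENNReal.ofReal (2 * ρ i) ≤ ediam (range c) + 2 * ENNReal.ofReal R :=
  calc ∑' i, ENNReal.ofReal (2 * ρ i) = ∑' i, volume (ball (c i) (ρ i)) := by
        simp only [Real.volume_ball]
    _ ≤ volume (⋃ i, ball (c i) (ρ i)) :=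
        tsum_meas_le_meas_iUnion_of_disjoint _ (fun _ => measurableSet_ball) hdisj
    _ ≤ volume (thickening R.toNNReal (range c)) := measure_mono <| iUnion_subset fun i =>
        (ball_subset_thickening (mem_range_self i) _).trans
          (thickening_mono ((hρ i).trans (Real.le_coe_toNNReal R)) _)
    _ ≤ ediam (thickening R.toNNReal (range c)) := Real.volume_le_diam _
    _ ≤ ediam (range c) + 2 * ENNReal.ofReal R := ediam_thickening_le _

theorem tsum_ofReal_le_div_of_tsum_ofReal_mul_le {ι : Type*} {f : ι → ℝ} {a b : ℝ}
    (ha : 0 < a) (h : ∑' i, ENNReal.ofReal (a * f i) ≤ ENNReal.ofReal b) :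
    ∑' i, ENNReal.ofReal (f i) ≤ ENNReal.ofReal (b / a) := by
  simp only [ENNReal.ofReal_mul ha.le, ENNReal.tsum_mul_left] at h
  rw [ENNReal.ofReal_div_of_pos ha,
    ENNReal.le_div_iff_mul_le (.inl (ENNReal.ofReal_pos.2 ha).ne') (.inl ENNReal.ofReal_ne_top),
    mul_comm]
  exact h

theorem tsum_ofReal_le_of_pairwise_disjoint_ball_mul {ι : Type*} {c w : ι → ℝ} {a D W : ℝ}
    (ha : 0 < a) (hD : 0 ≤ D) (hW : 0 ≤ W) (hc : ediam (range c) ≤ ENNReal.ofReal D)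
    (hw : ∀ i, w i ≤ W) (hdisj : Pairwise (Disjoint on fun i => ball (c i) (a * w i))) :
    ∑' i, ENNReal.ofReal (w i) ≤ ENNReal.ofReal ((D + 2 * (a * W)) / (2 * a)) := by
  refine tsum_ofReal_le_div_of_tsum_ofReal_mul_le (by positivity) ?_
  calc ∑' i, ENNReal.ofReal (2 * a * w i) = ∑' i, ENNReal.ofReal (2 * (a * w i)) := by
        simp only [mul_assoc]
    _ ≤ ediam (range c) + 2 * ENNReal.ofReal (a * W) :=
        tsum_ofReal_two_mul_le_of_pairwise_disjoint_ball
          (fun i => mul_le_mul_of_nonneg_left (hw i) ha.le) hdisj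
    _ ≤ ENNReal.ofReal (D + 2 * (a * W)) := by
        rw [ENNReal.ofReal_add hD (by positivity), ENNReal.ofReal_mul zero_le_two,
          ENNReal.ofReal_ofNat]
        gcongr

theorem AntilipschitzWith.hausdorffMeasure_le_of_domRestrict {X Y : Type*} [EMetricSpace X]
    [EMetricSpace Y] [MeasurableSpace X] [BorelSpace X] [MeasurableSpace Y] [BorelSpace Y]
    {s : Set X} {f : X → Y} {K : ℝ≥0} (hf : AntilipschitzWith K (s.domRestrict f)) {d : ℝ}
    (hd : 0 ≤ d) : μH[d] s ≤ (K : ℝ≥0∞) ^ d * μH[d] (f '' s) := by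
  have := hf.le_hausdorffMeasure_image hd univ
  rwa [image_univ, range_domRestrict, ← isometry_subtype_coe.hausdorffMeasure_image (.inl hd),
    image_univ, Subtype.range_coe] at this

theorem hausdorffMeasure_one_le_mul_ediam_image {Z : Type*} [MetricSpace Z] [MeasurableSpace Z]
    [BorelSpace Z] {s : Set Z} {f : Z → ℝ} {K : ℝ≥0}
    (hf : ∀ x ∈ s, ∀ y ∈ s, dist x y ≤ K * dist (f x) (f y)) :
    μH[1] s ≤ K * ediam (f '' s) := by
  have hanti : AntilipschitzWith K (s.domRestrict f) :=
    AntilipschitzWith.of_le_mul_dist fun x y => hf x x.2 y y.2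
  calc μH[1] s ≤ (K : ℝ≥0∞) ^ (1 : ℝ) * μH[1] (f '' s) :=
        hanti.hausdorffMeasure_le_of_domRestrict zero_le_one
    _ ≤ K * ediam (f '' s) := by
        rw [ENNReal.rpow_one, hausdorffMeasure_real]
        exact mul_le_mul_right (Real.volume_le_diam _) _

theorem content_estimate_of_center_set_general {Z : Type*} [MetricSpace Z]
    [MeasurableSpace Z] [BorelSpace Z]
    (τ r : ℝ) (hτ : 0 < τ) (hτ' : τ ≤ 10 ^ (-10 : ℤ)) (hr : 0 < r)
    (C : Set Z) (hdiam : EMetric.diam C ≤ ENNReal.ofReal (4 * r))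
    (π : Z → ℝ)
    (hπ : ∀ X ∈ C, ∀ Y ∈ C,
      (1 - 2 * τ) * dist X Y ≤ |π X - π Y| ∧ |π X - π Y| ≤ dist X Y)
    (rfun : Z → ℝ) (hrle : ∀ X ∈ C, rfun X ≤ 2 * r)
    (hdisj : ({X ∈ C | 0 < rfun X}).Pairwise
      (fun X Y => Disjoint (Metric.ball X (τ ^ 2 * rfun X)) (Metric.ball Y (τ ^ 2 * rfun Y)))) :
    ({X ∈ C | 0 < rfun X}).Countable ∧
    (∑' X : {X : Z // X ∈ C ∧ 0 < rfun X}, ENNReal.ofReal (rfun X.1)) +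
      μH[1] {X ∈ C | rfun X = 0} ≤ ENNReal.ofReal (50 * (τ ^ 2)⁻¹ * r) := by
  have hτ4 : τ ≤ 1 / 4 := hτ'.trans (by norm_num)
  have hπanti : ∀ X ∈ C, ∀ Y ∈ C, dist X Y ≤ (2 : ℝ≥0) * dist (π X) (π Y) :=
    fun X hX Y hY => by
      rw [Real.dist_eq, NNReal.coe_ofNat]
      nlinarith [(hπ X hX Y hY).1, dist_nonneg (x := X) (y := Y)]
  have hdiamπ : ediam (π '' C) ≤ ENNReal.ofReal (4 * r) :=
    (ediam_image_le_of_dist_le fun X hX Y hY => by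
      simpa only [Real.dist_eq] using (hπ X hX Y hY).2).trans hdiam
  have hdisjπ : ({X ∈ C | 0 < rfun X}).PairwiseDisjoint
      fun X => ball (π X) (τ ^ 2 / (2 * 2) * rfun X) := fun X hX Y hY hXY => by
    simpa only [mul_div_right_comm] using
      disjoint_ball_of_le_mul_dist (by have := hX.2; positivity) (by have := hY.2; positivity)
        two_pos (hπanti X hX.1 Y hY.1) (hdisj hX hY hXY)
  refine ⟨hdisjπ.countable_of_isOpen (fun _ _ => isOpen_ball)
    fun X hX => ⟨π X, mem_ball_self (by have := hX.2; positivity)⟩, ?_⟩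
  have hsum := tsum_ofReal_le_of_pairwise_disjoint_ball_mul
    (w := fun X : {X : Z // X ∈ C ∧ 0 < rfun X} => rfun X) (by positivity) (by positivity)
    (by positivity)
    ((ediam_mono (range_subset_iff.2 fun X => mem_image_of_mem π X.2.1)).trans hdiamπ)
    (fun X => hrle X X.2.1) fun X Y hXY => hdisjπ X.2 Y.2 (Subtype.coe_ne_coe.2 hXY)
  have hH : μH[1] {X ∈ C | rfun X = 0} ≤ (2 : ℝ≥0) * ENNReal.ofReal (4 * r) :=
    (hausdorffMeasure_one_le_mul_ediam_image fun X hX Y hY => hπanti X hX.1 Y hY.1).trans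
      (mul_le_mul_right ((ediam_mono (image_mono (sep_subset _ _))).trans hdiamπ) _)
  calc _ ≤ ENNReal.ofReal ((4 * r + 2 * (τ ^ 2 / (2 * 2) * (2 * r))) / (2 * (τ ^ 2 / (2 * 2))))
        + ENNReal.ofReal (2 * (4 * r)) := by
        rw [ENNReal.ofReal_mul zero_le_two, ENNReal.ofReal_ofNat]
        exact add_le_add hsum hH
    _ ≤ _ := by
        rw [← ENNReal.ofReal_add (by positivity) (by positivity)]
        refine ENNReal.ofReal_le_ofReal ?_
        field_simp
        nlinarith

/-- Content estimate for the centers of a cylindrical region: if `C` has diameter at most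
`4r`, admits a map `π` to the line that is bi-Lipschitz with constants `(1 − 2τ)` and `1`,
the radii satisfy `r_X ≤ 2r`, and the balls `B(X, τ² r_X)` with `r_X > 0` are pairwise
disjoint, then `{X ∈ C : r_X > 0}` is countable and
`∑_{r_X > 0} r_X + H¹({X ∈ C : r_X = 0}) ≤ 50 τ⁻² r`. -/
theorem content_estimate_of_center_set {Z : Type*} [MetricSpace Z]
    [MeasurableSpace Z] [BorelSpace Z]
    (τ r : ℝ) (hτ : 0 < τ) (hτ' : τ ≤ 10 ^ (-10 : ℤ)) (hr : 0 < r)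
    (C : Set Z) (hdiam : EMetric.diam C ≤ ENNReal.ofReal (4 * r))
    (π : Z → ℝ)
    (hπ : ∀ X ∈ C, ∀ Y ∈ C,
      (1 - 2 * τ) * dist X Y ≤ |π X - π Y| ∧ |π X - π Y| ≤ dist X Y)
    (rfun : Z → ℝ) (hrnonneg : ∀ X ∈ C, 0 ≤ rfun X) (hrle : ∀ X ∈ C, rfun X ≤ 2 * r)
    (hdisj : ({X ∈ C | 0 < rfun X}).Pairwise
      (fun X Y => Disjoint (Metric.ball X (τ ^ 2 * rfun X)) (Metric.ball Y (τ ^ 2 * rfun Y)))) :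
    ({X ∈ C | 0 < rfun X}).Countable ∧
    (∑' X : {X : Z // X ∈ C ∧ 0 < rfun X}, ENNReal.ofReal (rfun X.1)) +
      μH[1] {X ∈ C | rfun X = 0} ≤ ENNReal.ofReal (50 * (τ ^ 2)⁻¹ * r) :=
  content_estimate_of_center_set_general τ r hτ hτ' hr C hdiam π hπ rfun hrle hdisj
end

section
/- Let (Z,d) be a metric space, let 0 < τ ≤ 10^{−10}, r > 0, and let C ⊆ Z be a nonempty set of diameter at most 4r admitting a map π : C → ℝ with (1 − 2τ) d(X,Y) ≤ |π(X) − π(Y)| ≤ d(X,Y) for all X, Y ∈ C. Let μ be a Borel measure on Z, let Λ > 0, and let 0 < s ≤ r be such that μ(B(X, 2s)) ≤ Λ s⁴ for every X ∈ C. Then the closed s-neighborhood of C satisfies μ({z ∈ Z : dist(z, C) ≤ s}) ≤ 10 Λ s³ r. -/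
/-!
Pick a maximal `s/2`-separated subset `N` of `C`. By maximality `N` is an `s/2`-net of `C`, so
the balls `B(Y, 2s)`, `Y ∈ N`, cover the closed `s`-neighbourhood of `C`. Since `π` shrinks
distances on `C` by a factor of at most `1 - 2τ ≥ 8/9`, the values `π(Y)`, `Y ∈ N`, are
`4s/9`-separated points of a segment of length `4r`; hence `#N ≤ 9r/s + 1 ≤ 10r/s`, and each
ball has measure at most `Λ s⁴`.
-/

open MeasureTheory Metric
open scoped NNReal ENNReal

namespace Metric

variable {X : Type*} [PseudoMetricSpace X]

lemma isSeparated_coe_iff_pairwise_lt_dist {ε : ℝ≥0} {s : Set X} :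
    IsSeparated ε s ↔ s.Pairwise fun x y => ε < dist x y := by
  simp only [IsSeparated, ← not_le, edist_le_coe, ← NNReal.coe_le_coe, coe_nndist]

end Metric

lemma Real.encard_le_of_isSeparated {T : Set ℝ} {δ : ℝ≥0} {L : ℝ} (hδ : 0 < δ)
    (hT : IsSeparated δ T) (hL : ∀ x ∈ T, ∀ y ∈ T, dist x y ≤ L) :
    T.encard ≤ ⌊L / δ⌋₊ + 1 := by
  obtain rfl | ⟨t₀, ht₀⟩ := T.eq_empty_or_nonempty
  · simp
  have hbdd : BddBelow T := ⟨t₀ - L, fun t ht => by linarith [(abs_le.mp (hL t₀ ht₀ t ht)).2]⟩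
  set a := sInf T
  have ha : ∀ t ∈ T, a ≤ t ∧ t ≤ a + L := fun t ht =>
    ⟨csInf_le hbdd ht, by
      have : t - L ≤ a := le_csInf ⟨t₀, ht₀⟩ fun t' ht' => by
        linarith [(abs_le.mp (hL t ht t' ht')).2]
      linarith⟩
  have hδ' : (0 : ℝ) < δ := hδ
  -- Points of `T` in the same slot `[a + kδ, a + (k+1)δ)` are less than `δ` apart.
  let slot : ℝ → ℕ := fun t => ⌊(t - a) / δ⌋₊
  have hmaps : Set.MapsTo slot T (Set.Iic ⌊L / δ⌋₊) := fun t ht =>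
    Nat.floor_le_floor (div_le_div_of_nonneg_right (by linarith [ha t ht]) hδ'.le)
  have hinj : Set.InjOn slot T := by
    intro x hx y hy hxy
    by_contra hne
    have hsep : (δ : ℝ) < dist x y := isSeparated_coe_iff_pairwise_lt_dist.mp hT hx hy hne
    have hx₁ := Nat.floor_le (div_nonneg (sub_nonneg.mpr (ha x hx).1) hδ'.le)
    have hx₂ := Nat.lt_floor_add_one ((x - a) / δ)
    have hy₁ := Nat.floor_le (div_nonneg (sub_nonneg.mpr (ha y hy).1) hδ'.le)
    have hy₂ := Nat.lt_floor_add_one ((y - a) / δ)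
    simp only [slot] at hxy
    rw [hxy] at hx₁ hx₂
    have : |x - y| < δ := by
      rw [abs_sub_lt_iff]
      constructor <;>
        nlinarith [div_mul_cancel₀ (x - a) hδ'.ne', div_mul_cancel₀ (y - a) hδ'.ne']
    exact (lt_asymm hsep this).elim
  calc T.encard ≤ (Set.Iic ⌊L / δ⌋₊).encard := Set.encard_le_encard_of_injOn hmaps hinj
    _ = ⌊L / δ⌋₊ + 1 := by
      rw [← Finset.coe_Iic, Set.encard_coe_eq_coe_finsetCard, Nat.card_Iic]
      norm_cast

namespace Metric

variable {X : Type*} [PseudoMetricSpace X]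

lemma packingNumber_le_of_mul_dist_le {A : Set X} {f : X → ℝ} {K ε : ℝ≥0} {L : ℝ}
    (hK : 0 < K) (hε : 0 < ε)
    (hf : ∀ x ∈ A, ∀ y ∈ A, K * dist x y ≤ dist (f x) (f y))
    (hL : ∀ x ∈ A, ∀ y ∈ A, dist (f x) (f y) ≤ L) :
    packingNumber ε A ≤ ⌊L / (K * ε)⌋₊ + 1 := by
  refine iSup₂_le fun S hSA => iSup_le fun hS => ?_
  have hdist : ∀ x ∈ S, ∀ y ∈ S, x ≠ y → K * ε < dist (f x) (f y) := fun x hx y hy hne =>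
    calc (K * ε : ℝ) < K * dist x y := by
          gcongr
          exact isSeparated_coe_iff_pairwise_lt_dist.mp hS hx hy hne
      _ ≤ dist (f x) (f y) := hf x (hSA hx) y (hSA hy)
  have hinj : Set.InjOn f S := fun x hx y hy hxy => by
    by_contra hne
    have := hdist x hx y hy hne
    rw [hxy, dist_self] at this
    exact (this.trans_le' (by positivity)).false
  rw [← hinj.encard_image]
  refine Real.encard_le_of_isSeparated (mul_pos hK hε) ?_ ?_
  · rw [isSeparated_coe_iff_pairwise_lt_dist]
    rintro _ ⟨x, hx, rfl⟩ _ ⟨y, hy, rfl⟩ hne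
    exact hdist x hx y hy (ne_of_apply_ne f hne)
  · rintro _ ⟨x, hx, rfl⟩ _ ⟨y, hy, rfl⟩
    exact hL x (hSA hx) y (hSA hy)

lemma IsCover.setOf_infDist_le_subset_iUnion_ball {ε : ℝ≥0} {C N : Set X}
    (hN : IsCover ε C N) (hC : C.Nonempty) {δ ρ : ℝ} (hρ : δ + ε < ρ) :
    {z | infDist z C ≤ δ} ⊆ ⋃ y ∈ N, ball y ρ := by
  intro z hz
  obtain ⟨x, hxC, hzx⟩ := (infDist_lt_iff hC).mp (hz.trans_lt (lt_sub_iff_add_lt.mpr hρ))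
  obtain ⟨y, hyN, hxy⟩ := hN hxC
  have hxy : edist x y ≤ ε := hxy
  rw [edist_le_coe, ← NNReal.coe_le_coe, coe_nndist] at hxy
  exact Set.mem_biUnion hyN (by rw [mem_ball]; linarith [dist_triangle z x y])

end Metric

namespace MeasureTheory

lemma measure_biUnion_le_encard_mul {α ι : Type*} [MeasurableSpace α] (μ : Measure α)
    {I : Set ι} (hI : I.Countable) (s : ι → Set α) {M : ℝ≥0∞} (hM : ∀ i ∈ I, μ (s i) ≤ M) :
    μ (⋃ i ∈ I, s i) ≤ I.encard * M :=
  calc μ (⋃ i ∈ I, s i) ≤ ∑' i : I, μ (s i) := measure_biUnion_le μ hI s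
    _ ≤ ∑' _ : I, M := ENNReal.tsum_le_tsum fun i => hM i i.2
    _ = I.encard * M := ENNReal.tsum_const M

lemma measure_setOf_infDist_le_le_packingNumber_mul {X : Type*} [PseudoMetricSpace X]
    [MeasurableSpace X] (μ : Measure X) {C : Set X} (hC : C.Nonempty) {ε : ℝ≥0}
    (hε : packingNumber ε C ≠ ⊤) {δ ρ : ℝ} (hρ : δ + ε < ρ) {M : ℝ≥0∞}
    (hM : ∀ x ∈ C, μ (ball x ρ) ≤ M) :
    μ {z | infDist z C ≤ δ} ≤ packingNumber ε C * M := by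
  set N := maximalSeparatedSet ε C
  have hN : N.Countable :=
    (Set.encard_ne_top_iff.mp (encard_maximalSeparatedSet hε ▸ hε)).countable
  calc μ {z | infDist z C ≤ δ} ≤ μ (⋃ y ∈ N, ball y ρ) :=
        measure_mono ((isCover_maximalSeparatedSet hε).setOf_infDist_le_subset_iUnion_ball hC hρ)
    _ ≤ N.encard * M :=
        measure_biUnion_le_encard_mul μ hN _ fun y hy => hM y (maximalSeparatedSet_subset hy)
    _ = packingNumber ε C * M := by rw [encard_maximalSeparatedSet hε]

end MeasureTheory

lemma ENNReal.natCast_mul_ofReal_mul_le {k : ℕ} {a b c : ℝ} (ha : 0 ≤ a) (h : k * a ≤ c) :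
    (k : ℝ≥0∞) * ENNReal.ofReal (a * b) ≤ ENNReal.ofReal (c * b) := by
  have hc : 0 ≤ c := (mul_nonneg k.cast_nonneg ha).trans h
  rw [ENNReal.ofReal_mul ha, ← mul_assoc, ← ENNReal.ofReal_natCast,
    ← ENNReal.ofReal_mul k.cast_nonneg, ENNReal.ofReal_mul hc]
  gcongr

theorem volume_estimate_of_center_neighborhood_general {Z : Type*} [MetricSpace Z]
    [MeasurableSpace Z]
    (τ r : ℝ) (hτ' : τ ≤ 10 ^ (-10 : ℤ))
    (C : Set Z) (hC : C.Nonempty) (hdiam : EMetric.diam C ≤ ENNReal.ofReal (4 * r))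
    (π : Z → ℝ)
    (hπ : ∀ X ∈ C, ∀ Y ∈ C,
      (1 - 2 * τ) * dist X Y ≤ |π X - π Y| ∧ |π X - π Y| ≤ dist X Y)
    (μ : Measure Z) (Λ : ℝ)
    (s : ℝ) (hs : 0 < s) (hsr : s ≤ r)
    (hball : ∀ X ∈ C, μ (Metric.ball X (2 * s)) ≤ ENNReal.ofReal (Λ * s ^ 4)) :
    μ {z : Z | Metric.infDist z C ≤ s} ≤ ENNReal.ofReal (10 * Λ * s ^ 3 * r) := by
  have hτ : τ ≤ 1 / 18 := hτ'.trans (by norm_num)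
  have hr : 0 < r := hs.trans_le hsr
  set ε : ℝ≥0 := ⟨s / 2, by positivity⟩
  have hε : (ε : ℝ) = s / 2 := rfl
  have hε_pos : 0 < ε := NNReal.coe_pos.mp (by rw [hε]; positivity)
  have hπ_lower : ∀ X ∈ C, ∀ Y ∈ C, ((8 / 9 : ℝ≥0) : ℝ) * dist X Y ≤ dist (π X) (π Y) :=
    fun X hX Y hY => by
      push_cast
      nlinarith [(hπ X hX Y hY).1, dist_nonneg (x := X) (y := Y), Real.dist_eq (π X) (π Y)]
  have hπ_upper : ∀ X ∈ C, ∀ Y ∈ C, dist (π X) (π Y) ≤ 4 * r := fun X hX Y hY =>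
    (Real.dist_eq _ _).trans_le <| (hπ X hX Y hY).2.trans <|
      (edist_le_ofReal (by positivity)).mp ((edist_le_ediam_of_mem hX hY).trans hdiam)
  have hpack : packingNumber ε C ≤ ⌊9 * r / s⌋₊ + 1 := by
    convert packingNumber_le_of_mul_dist_le (by norm_num) hε_pos hπ_lower hπ_upper using 4
    rw [hε]; push_cast; field_simp; ring
  have hcount : ((⌊9 * r / s⌋₊ + 1 : ℕ) : ℝ) * s ≤ 10 * r := by
    have := (le_div_iff₀ hs).mp (Nat.floor_le (by positivity : 0 ≤ 9 * r / s))
    push_cast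
    linarith
  calc μ {z | infDist z C ≤ s}
      ≤ packingNumber ε C * ENNReal.ofReal (s * (Λ * s ^ 3)) := by
        refine measure_setOf_infDist_le_le_packingNumber_mul μ hC (ρ := 2 * s)
          (ne_top_of_le_ne_top (by simp) hpack) (by rw [hε]; linarith) fun X hX => ?_
        exact (hball X hX).trans_eq (by ring_nf)
    _ ≤ ((⌊9 * r / s⌋₊ + 1 : ℕ) : ℝ≥0∞) * ENNReal.ofReal (s * (Λ * s ^ 3)) := by
        gcongr
        exact_mod_cast hpack
    _ ≤ ENNReal.ofReal (10 * Λ * s ^ 3 * r) :=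
        (ENNReal.natCast_mul_ofReal_mul_le hs.le hcount).trans_eq (by ring_nf)

/-- Volume estimate for neighborhoods of the center set: if `C` is nonempty of diameter at
most `4r`, admits a map `π` to the line which is bi-Lipschitz with constants `(1 − 2τ)`
and `1`, and `μ(B(X, 2s)) ≤ Λ s⁴` for all `X ∈ C`, then the closed `s`-neighborhood of `C`
has measure at most `10 Λ s³ r`. -/
theorem volume_estimate_of_center_neighborhood {Z : Type*} [MetricSpace Z]
    [MeasurableSpace Z]
    (τ r : ℝ) (hτ : 0 < τ) (hτ' : τ ≤ 10 ^ (-10 : ℤ)) (hr : 0 < r)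
    (C : Set Z) (hC : C.Nonempty) (hdiam : EMetric.diam C ≤ ENNReal.ofReal (4 * r))
    (π : Z → ℝ)
    (hπ : ∀ X ∈ C, ∀ Y ∈ C,
      (1 - 2 * τ) * dist X Y ≤ |π X - π Y| ∧ |π X - π Y| ≤ dist X Y)
    (μ : Measure Z) (Λ : ℝ) (hΛ : 0 < Λ)
    (s : ℝ) (hs : 0 < s) (hsr : s ≤ r)
    (hball : ∀ X ∈ C, μ (Metric.ball X (2 * s)) ≤ ENNReal.ofReal (Λ * s ^ 4)) :
    μ {z : Z | Metric.infDist z C ≤ s} ≤ ENNReal.ofReal (10 * Λ * s ^ 3 * r) :=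
  volume_estimate_of_center_neighborhood_general τ r hτ' C hC hdiam π hπ μ Λ s hs hsr hball
end
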